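/- The Dini condition holds for C^{1,β} convex domains (Proposition 7.1): Let n ≥ 2 and let Ω ⊆ ℝⁿ be a nonempty open bounded convex set. Suppose there exist constants H > 0 and β ∈ (0,1] such that at every boundary point y ∈ ∂Ω the outer supporting normal of Ω is unique, denoted ν(y), and the Gauss map is β-Hölder: ‖ν(y) − ν(y′)‖ ≤ H·‖y − y′‖^β for all y, y′ ∈ ∂Ω. Then for every x ∈ ∂Ω, ∫₀¹ M_x(t)/t² dt ≤ H/β. -/

import Mathlib

open Set
open scoped RealInnerProductSpace

noncomputable section

/-- A unit vector `ν` is an outer supporting normal of `Ω` at `y` if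
`⟨ν, z − y⟩ ≤ 0` for all `z ∈ Ω`. -/
def IsOuterNormal {E : Type*} [NormedAddCommGroup E] [InnerProductSpace ℝ E]
    (Ω : Set E) (y ν : E) : Prop :=
  ‖ν‖ = 1 ∧ ∀ z ∈ Ω, ⟪ν, z - y⟫ ≤ 0

/-- `M_x(t) = sup {⟨ν, y − x⟩ : y ∈ ∂Ω, 0 < ‖y − x‖ ≤ t, ν an outer supporting normal at y}`
(`sSup ∅ = 0` in `ℝ`, so the empty case gives `0`). -/
noncomputable def Mfun {E : Type*} [NormedAddCommGroup E] [InnerProductSpace ℝ E]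
    (Ω : Set E) (x : E) (t : ℝ) : ℝ :=
  sSup {m : ℝ | ∃ y ν : E, y ∈ frontier Ω ∧ 0 < ‖y - x‖ ∧ ‖y - x‖ ≤ t ∧
    IsOuterNormal Ω y ν ∧ m = ⟪ν, y - x⟫}

/-- The rescaled spherical slice `V_t = {ω ∈ 𝕊^{n−1} : t·ω ∈ Ω}`. -/
def Vslice {E : Type*} [NormedAddCommGroup E] [InnerProductSpace ℝ E]
    (Ω : Set E) (t : ℝ) : Set E :=
  {ω | ‖ω‖ = 1 ∧ t • ω ∈ Ω}

/-- `S_c = {t ∈ (0,1) : M₀(s) ≤ c·s for all s ∈ [t/4, 4t]}`. -/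
def Sset {E : Type*} [NormedAddCommGroup E] [InnerProductSpace ℝ E]
    (Ω : Set E) (c : ℝ) : Set ℝ :=
  {t | t ∈ Ioo (0:ℝ) 1 ∧ ∀ s ∈ Icc (t/4) (4*t), Mfun Ω 0 s ≤ c * s}

/-- Cap hypothesis: the slice `V₁` contains the geodesic cap of radius `rstar` around
the unit vector `e`. -/
def CapHyp {E : Type*} [NormedAddCommGroup E] [InnerProductSpace ℝ E]
    (Ω : Set E) (e : E) (rstar : ℝ) : Prop :=
  ‖e‖ = 1 ∧ ∀ ω : E, ‖ω‖ = 1 → Real.cos rstar < ⟪ω, e⟫ → ω ∈ Vslice Ω 1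

/-!
Since the outer normal at `x` supports `Ω`, `⟪ν x, y - x⟫ ≤ 0` on `∂Ω`, so
`⟪ν y, y - x⟫ ≤ ⟪ν y - ν x, y - x⟫ ≤ H ‖y - x‖ ^ (1 + β)`. Uniqueness of the normal makes this
bound apply to every term of the supremum defining `M_x(t)`, hence `M_x(t) / t² ≤ H t ^ (β - 1)`,
whose integral over `(0, 1)` is `H / β`.
-/

open MeasureTheory

section

variable {E : Type*} [NormedAddCommGroup E] [InnerProductSpace ℝ E]

theorem IsOuterNormal.inner_sub_nonpos_of_mem_closure {Ω : Set E} {x ν y : E}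
    (h : IsOuterNormal Ω x ν) (hy : y ∈ closure Ω) : ⟪ν, y - x⟫ ≤ 0 :=
  closure_minimal (t := {z | ⟪ν, z - x⟫ ≤ 0}) h.2
    (isClosed_le (continuous_const.inner (continuous_sub_right x)) continuous_const) hy

theorem IsOuterNormal.inner_sub_le_of_holder {Ω : Set E} {ν : E → E} {H β : ℝ} {x y : E}
    (hνx : IsOuterNormal Ω x (ν x)) (hy : y ∈ closure Ω)
    (hHolder : ‖ν y - ν x‖ ≤ H * ‖y - x‖ ^ β) :
    ⟪ν y, y - x⟫ ≤ H * ‖y - x‖ ^ β * ‖y - x‖ :=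
  calc ⟪ν y, y - x⟫ = ⟪ν y - ν x, y - x⟫ + ⟪ν x, y - x⟫ := by rw [inner_sub_left]; ring
    _ ≤ ‖ν y - ν x‖ * ‖y - x‖ + 0 :=
      add_le_add (real_inner_le_norm _ _) (hνx.inner_sub_nonpos_of_mem_closure hy)
    _ ≤ H * ‖y - x‖ ^ β * ‖y - x‖ := by
      rw [add_zero]; exact mul_le_mul_of_nonneg_right hHolder (norm_nonneg _)

theorem Mfun_le_of_holder {Ω : Set E} {ν : E → E} {H β t : ℝ} {x : E}
    (hH : 0 ≤ H) (hβ : 0 ≤ β) (ht : 0 ≤ t) (hνx : IsOuterNormal Ω x (ν x))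
    (huniq : ∀ y ∈ frontier Ω, ∀ ν', IsOuterNormal Ω y ν' → ν' = ν y)
    (hHolder : ∀ y ∈ frontier Ω, ‖ν y - ν x‖ ≤ H * ‖y - x‖ ^ β) :
    Mfun Ω x t ≤ H * t ^ β * t := by
  refine Real.sSup_le ?_ (by positivity)
  rintro _ ⟨y, ν', hy, -, hyt, hν', rfl⟩
  obtain rfl := huniq y hy ν' hν'
  calc ⟪ν y, y - x⟫ ≤ H * ‖y - x‖ ^ β * ‖y - x‖ :=
        hνx.inner_sub_le_of_holder (frontier_subset_closure hy) (hHolder y hy)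
    _ ≤ H * t ^ β * t := by gcongr

end

theorem lintegral_Ioo_ofReal_rpow_sub_one {β : ℝ} (hβ : 0 < β) :
    ∫⁻ t in Ioo (0 : ℝ) 1, ENNReal.ofReal (t ^ (β - 1)) = ENNReal.ofReal (1 / β) := by
  have hexp : (-1 : ℝ) < β - 1 := by linarith
  have hint : IntegrableOn (fun t : ℝ => t ^ (β - 1)) (Ioo 0 1) :=
    ((intervalIntegrable_iff_integrableOn_Ioc_of_le zero_le_one).mp
      (intervalIntegral.intervalIntegrable_rpow' hexp)).mono_set Ioo_subset_Ioc_self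
  have hnonneg : 0 ≤ᵐ[volume.restrict (Ioo (0 : ℝ) 1)] fun t : ℝ => t ^ (β - 1) := by
    filter_upwards [ae_restrict_mem measurableSet_Ioo] with t ht
    exact Real.rpow_nonneg ht.1.le _
  rw [← ofReal_integral_eq_lintegral_ofReal hint hnonneg, ← integral_Ioc_eq_integral_Ioo,
    ← intervalIntegral.integral_of_le zero_le_one, integral_rpow (Or.inl hexp)]
  simp [Real.zero_rpow hβ.ne']

theorem dini_of_C1beta_general {n : ℕ}
    (Ω : Set (EuclideanSpace ℝ (Fin n)))
    (H β : ℝ) (hH : 0 < H) (hβ : β ∈ Ioc (0:ℝ) 1)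
    (ν : EuclideanSpace ℝ (Fin n) → EuclideanSpace ℝ (Fin n))
    (hν : ∀ y ∈ frontier Ω, IsOuterNormal Ω y (ν y))
    (huniq : ∀ y ∈ frontier Ω, ∀ ν' : EuclideanSpace ℝ (Fin n),
      IsOuterNormal Ω y ν' → ν' = ν y)
    (hHolder : ∀ y ∈ frontier Ω, ∀ y' ∈ frontier Ω, ‖ν y - ν y'‖ ≤ H * ‖y - y'‖ ^ β) :
    ∀ x ∈ frontier Ω,
      ∫⁻ t in Ioo (0:ℝ) 1, ENNReal.ofReal (Mfun Ω x t / t ^ 2) ≤ ENNReal.ofReal (H / β) := by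
  intro x hx
  have hM : ∀ t ∈ Ioo (0 : ℝ) 1, Mfun Ω x t / t ^ 2 ≤ H * t ^ (β - 1) := fun t ht => by
    have hMt := Mfun_le_of_holder hH.le hβ.1.le ht.1.le (hν x hx) huniq
      (fun y hy => hHolder y hy x hx)
    calc Mfun Ω x t / t ^ 2 ≤ H * t ^ β * t / t ^ 2 := by gcongr
      _ = H * t ^ (β - 1) := by rw [Real.rpow_sub_one ht.1.ne']; field_simp
  calc ∫⁻ t in Ioo (0 : ℝ) 1, ENNReal.ofReal (Mfun Ω x t / t ^ 2)
      ≤ ∫⁻ t in Ioo (0 : ℝ) 1, ENNReal.ofReal H * ENNReal.ofReal (t ^ (β - 1)) :=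
        setLIntegral_mono' measurableSet_Ioo fun t ht => by
          rw [← ENNReal.ofReal_mul hH.le]; exact ENNReal.ofReal_le_ofReal (hM t ht)
    _ = ENNReal.ofReal (H / β) := by
      rw [lintegral_const_mul' _ _ ENNReal.ofReal_ne_top, lintegral_Ioo_ofReal_rpow_sub_one hβ.1,
        ← ENNReal.ofReal_mul hH.le, mul_one_div]

/-- The Dini condition holds for `C^{1,β}` convex domains (Proposition 7.1). -/
theorem dini_of_C1beta {n : ℕ} (hn : 2 ≤ n)
    (Ω : Set (EuclideanSpace ℝ (Fin n))) (hopen : IsOpen Ω)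
    (hbdd : Bornology.IsBounded Ω) (hconv : Convex ℝ Ω) (hne : Ω.Nonempty)
    (H β : ℝ) (hH : 0 < H) (hβ : β ∈ Ioc (0:ℝ) 1)
    (ν : EuclideanSpace ℝ (Fin n) → EuclideanSpace ℝ (Fin n))
    (hν : ∀ y ∈ frontier Ω, IsOuterNormal Ω y (ν y))
    (huniq : ∀ y ∈ frontier Ω, ∀ ν' : EuclideanSpace ℝ (Fin n),
      IsOuterNormal Ω y ν' → ν' = ν y)
    (hHolder : ∀ y ∈ frontier Ω, ∀ y' ∈ frontier Ω, ‖ν y - ν y'‖ ≤ H * ‖y - y'‖ ^ β) :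
    ∀ x ∈ frontier Ω,
      ∫⁻ t in Ioo (0:ℝ) 1, ENNReal.ofReal (Mfun Ω x t / t ^ 2) ≤ ENNReal.ofReal (H / β) :=
  dini_of_C1beta_general Ω H β hH hβ ν hν huniq hHolder
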